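/- arXiv:1205.1592 — 8 statements merged into one kernel-verified Lean document; each statement's English description precedes it below -/
import Mathlib

section
/- (Undecomposability of type IV, Proposition 4.4) There do not exist matrices A₁, A₂ ∈ SL(2,ℤ), each conjugate in SL(2,ℤ) to A_{I₂} = [[1,2],[0,1]], such that the product A₁·A₂ is conjugate in SL(2,ℤ) to A_{IV} = [[0,1],[-1,-1]]. In other words, the fiber type IV admits no monodromy decomposition into I₂ + I₂. -/
/-- The special linear group `SL(2, ℤ)`. -/
abbrev SL2Z := Matrix.SpecialLinearGroup (Fin 2) ℤ

/-- `A` is conjugate to `B` in `SL(2, ℤ)`: there is `P` with `P⁻¹ * A * P = B`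
(stated as `P * A * P⁻¹ = B`). -/
def ConjTo (A B : SL2Z) : Prop := ∃ P : SL2Z, P * A * P⁻¹ = B

/-- The standard monodromy matrix `A_{I₂} = [[1,2],[0,1]]`. -/
def AI2 : SL2Z := ⟨!![1, 2; 0, 1], by norm_num [Matrix.det_fin_two_of]⟩

/-- The standard monodromy matrix `A_{IV} = [[0,1],[-1,-1]]`. -/
def AIV : SL2Z := ⟨!![0, 1; -1, -1], by norm_num [Matrix.det_fin_two_of]⟩

/-- Proposition 4.4: the fiber type `IV` admits no monodromy decomposition
into `I₂ + I₂`. -/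
theorem IV_no_decomposition_I2_I2 :
    ¬ ∃ A₁ A₂ : SL2Z, ConjTo A₁ AI2 ∧ ConjTo A₂ AI2 ∧ ConjTo (A₁ * A₂) AIV := by
  rintro ⟨A₁, A₂, ⟨P₁, h₁⟩, ⟨P₂, h₂⟩, ⟨P, h⟩⟩
  set f := Matrix.SpecialLinearGroup.map (n := Fin 2) (Int.castRingHom (ZMod 2)) with hf
  have hI2 : f AI2 = 1 := by
    apply Subtype.ext
    rw [Matrix.SpecialLinearGroup.map_apply_coe, Matrix.SpecialLinearGroup.coe_one]
    ext i j
    fin_cases i <;> fin_cases j <;> simp [AI2]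
    decide
  have hA₁ : f A₁ = 1 := by
    have : A₁ = P₁⁻¹ * AI2 * P₁ := by
      rw [← h₁]; group
    rw [this]; simp [hI2]
  have hA₂ : f A₂ = 1 := by
    have : A₂ = P₂⁻¹ * AI2 * P₂ := by
      rw [← h₂]; group
    rw [this]; simp [hI2]
  have hIV : f AIV = 1 := by
    rw [← h]; simp [hA₁, hA₂]
  have : ((f AIV : Matrix.SpecialLinearGroup (Fin 2) (ZMod 2)) : Matrix (Fin 2) (Fin 2) (ZMod 2)) 0 0 = 1 := by
    rw [hIV]; simp
  have h00 : ((f AIV : Matrix.SpecialLinearGroup (Fin 2) (ZMod 2)) : Matrix (Fin 2) (Fin 2) (ZMod 2)) 0 0 = 0 := by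
    rw [Matrix.SpecialLinearGroup.map_apply_coe]
    simp [AIV]
  rw [h00] at this
  exact one_ne_zero this.symm
end

section
/- (Undecomposability of type III*, Proposition 4.6) The fiber type III* admits no monodromy decomposition into any of: I₇ + II, I₇ + I₂, I₆ + III, I₆ + I₃. That is, there do not exist B₁, B₂ ∈ SL(2,ℤ) with B₁·B₂ conjugate to A_{III*} = [[0,-1],[1,0]] such that (B₁, B₂) are conjugate respectively to (A_{I₇} = [[1,7],[0,1]], A_{II} = [[1,1],[-1,0]]), or to (A_{I₇}, A_{I₂} = [[1,2],[0,1]]), or to (A_{I₆} = [[1,6],[0,1]], A_{III} = [[0,1],[-1,0]]), or to (A_{I₆}, A_{I₃} = [[1,3],[0,1]]). -/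
/-- The standard monodromy matrix `A_{I_n} = [[1,n],[0,1]]`. -/
def AI (n : ℤ) : SL2Z := ⟨!![1, n; 0, 1], by simp [Matrix.det_fin_two_of]⟩

/-- The standard monodromy matrix `A_{II} = [[1,1],[-1,0]]`. -/
def AII : SL2Z := ⟨!![1, 1; -1, 0], by norm_num [Matrix.det_fin_two_of]⟩

/-- The standard monodromy matrix `A_{III} = [[0,1],[-1,0]]`. -/
def AIII : SL2Z := ⟨!![0, 1; -1, 0], by norm_num [Matrix.det_fin_two_of]⟩

/-- The standard monodromy matrix `A_{I₀*} = -I`. -/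
def negI : SL2Z := ⟨!![-1, 0; 0, -1], by norm_num [Matrix.det_fin_two_of]⟩

/-- The standard monodromy matrix `A_{I_n*} = -[[1,n],[0,1]]`. -/
def AIstar (n : ℤ) : SL2Z := ⟨!![-1, -n; 0, -1], by simp [Matrix.det_fin_two_of]⟩

/-- The standard monodromy matrix `A_{IV*} = [[-1,-1],[1,0]]`. -/
def AIVstar : SL2Z := ⟨!![-1, -1; 1, 0], by norm_num [Matrix.det_fin_two_of]⟩

/-- The standard monodromy matrix `A_{III*} = [[0,-1],[1,0]]`. -/
def AIIIstar : SL2Z := ⟨!![0, -1; 1, 0], by norm_num [Matrix.det_fin_two_of]⟩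

/-- The standard monodromy matrix `A_{II*} = [[0,-1],[1,1]]`. -/
def AIIstar : SL2Z := ⟨!![0, -1; 1, 1], by norm_num [Matrix.det_fin_two_of]⟩


lemma trace_eq_of_conjTo {A B : SL2Z} (h : ConjTo A B) :
    Matrix.trace (A : Matrix (Fin 2) (Fin 2) ℤ) = Matrix.trace (B : Matrix (Fin 2) (Fin 2) ℤ) := by
  obtain ⟨P, hP⟩ := h
  rw [← hP]
  simp only [Matrix.SpecialLinearGroup.coe_mul]
  rw [Matrix.trace_mul_comm, ← Matrix.mul_assoc, ← Matrix.SpecialLinearGroup.coe_mul,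
    inv_mul_cancel]
  simp

lemma main_aux {B₁ B₂ : SL2Z} {n : ℤ} (h1 : ConjTo B₁ (AI n))
    (hc : ConjTo (B₁ * B₂) AIIIstar) :
    ∃ C : SL2Z, ConjTo B₂ C ∧
      C.val 0 0 + n * C.val 1 0 + C.val 1 1 = 0 := by
  obtain ⟨P, hP⟩ := h1
  obtain ⟨C, hC⟩ : ∃ C : SL2Z, P * B₂ * P⁻¹ = C := ⟨_, rfl⟩
  refine ⟨C, ⟨P, hC⟩, ?_⟩
  have key : ConjTo (B₁ * B₂) (AI n * C) := by
    refine ⟨P, ?_⟩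
    rw [← hP, ← hC]
    group
  have ht := trace_eq_of_conjTo key
  have ht2 := trace_eq_of_conjTo hc
  rw [ht2] at ht
  have h0 : Matrix.trace (AIIIstar : Matrix (Fin 2) (Fin 2) ℤ) = 0 := by
    simp [AIIIstar, Matrix.trace_fin_two]
  rw [h0] at ht
  have := ht.symm
  rw [Matrix.SpecialLinearGroup.coe_mul, Matrix.trace_fin_two] at this
  simp [Matrix.mul_apply, Fin.sum_univ_two, AI] at this
  linarith [this]

lemma det_entries (C : SL2Z) :
    C.val 0 0 * C.val 1 1 - C.val 0 1 * C.val 1 0 = 1 := by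
  have := C.property
  rwa [Matrix.det_fin_two] at this

/-- Proposition 4.6: the fiber type `III*` admits no monodromy decomposition into
any of `I₇ + II`, `I₇ + I₂`, `I₆ + III`, `I₆ + I₃`. -/
theorem IIIstar_no_decomposition :
    (¬ ∃ B₁ B₂ : SL2Z, ConjTo B₁ (AI 7) ∧ ConjTo B₂ AII ∧ ConjTo (B₁ * B₂) AIIIstar) ∧
    (¬ ∃ B₁ B₂ : SL2Z, ConjTo B₁ (AI 7) ∧ ConjTo B₂ (AI 2) ∧ ConjTo (B₁ * B₂) AIIIstar) ∧
    (¬ ∃ B₁ B₂ : SL2Z, ConjTo B₁ (AI 6) ∧ ConjTo B₂ AIII ∧ ConjTo (B₁ * B₂) AIIIstar) ∧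
    (¬ ∃ B₁ B₂ : SL2Z, ConjTo B₁ (AI 6) ∧ ConjTo B₂ (AI 3) ∧ ConjTo (B₁ * B₂) AIIIstar) := by
  have hAII : Matrix.trace (AII : Matrix (Fin 2) (Fin 2) ℤ) = 1 := by
    simp [AII, Matrix.trace_fin_two]
  have hAIII : Matrix.trace (AIII : Matrix (Fin 2) (Fin 2) ℤ) = 0 := by
    simp [AIII, Matrix.trace_fin_two]
  have hAI : ∀ m : ℤ, Matrix.trace ((AI m) : Matrix (Fin 2) (Fin 2) ℤ) = 2 := by
    intro m; simp [AI, Matrix.trace_fin_two]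
  refine ⟨?_, ?_, ?_, ?_⟩
  · rintro ⟨B₁, B₂, h1, h2, hc⟩
    obtain ⟨C, hBC, heq⟩ := main_aux h1 hc
    have htr : Matrix.trace (C : Matrix (Fin 2) (Fin 2) ℤ) = 1 := by
      obtain ⟨P, hP⟩ := hBC
      rw [← trace_eq_of_conjTo ⟨P, hP⟩, trace_eq_of_conjTo h2, hAII]
    rw [Matrix.trace_fin_two] at htr
    omega
  · rintro ⟨B₁, B₂, h1, h2, hc⟩
    obtain ⟨C, hBC, heq⟩ := main_aux h1 hc
    have htr : Matrix.trace (C : Matrix (Fin 2) (Fin 2) ℤ) = 2 := by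
      obtain ⟨P, hP⟩ := hBC
      rw [← trace_eq_of_conjTo ⟨P, hP⟩, trace_eq_of_conjTo h2, hAI]
    rw [Matrix.trace_fin_two] at htr
    omega
  · rintro ⟨B₁, B₂, h1, h2, hc⟩
    obtain ⟨C, hBC, heq⟩ := main_aux h1 hc
    have htr : Matrix.trace (C : Matrix (Fin 2) (Fin 2) ℤ) = 0 := by
      obtain ⟨P, hP⟩ := hBC
      rw [← trace_eq_of_conjTo ⟨P, hP⟩, trace_eq_of_conjTo h2, hAIII]
    rw [Matrix.trace_fin_two] at htr
    have hc0 : C.val 1 0 = 0 := by omega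
    have hdet := det_entries C
    rw [hc0] at hdet
    nlinarith [sq_nonneg (C.val 0 0 - C.val 1 1), htr, hdet]
  · rintro ⟨B₁, B₂, h1, h2, hc⟩
    obtain ⟨C, hBC, heq⟩ := main_aux h1 hc
    have htr : Matrix.trace (C : Matrix (Fin 2) (Fin 2) ℤ) = 2 := by
      obtain ⟨P, hP⟩ := hBC
      rw [← trace_eq_of_conjTo ⟨P, hP⟩, trace_eq_of_conjTo h2, hAI]
    rw [Matrix.trace_fin_two] at htr
    omega
end

section
/- (Undecomposability of type IV*, Proposition 4.7) The fiber type IV* admits no monodromy decomposition into I₆ + II and no monodromy decomposition into I₆ + I₂. That is, there do not exist B₁, B₂ ∈ SL(2,ℤ) with B₁ conjugate to A_{I₆} = [[1,6],[0,1]], B₂ conjugate to A_{II} = [[1,1],[-1,0]] (respectively B₂ conjugate to A_{I₂} = [[1,2],[0,1]]), and B₁·B₂ conjugate to A_{IV*} = [[-1,-1],[1,0]]. -/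
lemma conjTo_isConj {A B : SL2Z} (h : ConjTo A B) : IsConj A B :=
  isConj_iff.mpr h

lemma trace_eq_of_isConj {R : Type*} [CommRing R]
    {A B : Matrix.SpecialLinearGroup (Fin 2) R} (h : IsConj A B) :
    Matrix.trace (A : Matrix (Fin 2) (Fin 2) R) = Matrix.trace (B : Matrix (Fin 2) (Fin 2) R) := by
  obtain ⟨g, hg⟩ := isConj_iff.mp h
  subst hg
  have : ((g * A * g⁻¹ : Matrix.SpecialLinearGroup (Fin 2) R) : Matrix (Fin 2) (Fin 2) R)
      = (g : Matrix (Fin 2) (Fin 2) R) * A * (g⁻¹ : Matrix.SpecialLinearGroup (Fin 2) R) := by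
    simp [Matrix.SpecialLinearGroup.coe_mul]
  rw [this, Matrix.trace_mul_cycle]
  have h1 : ((g⁻¹ : Matrix.SpecialLinearGroup (Fin 2) R) : Matrix (Fin 2) (Fin 2) R)
      * (g : Matrix (Fin 2) (Fin 2) R) = 1 := by
    rw [← Matrix.SpecialLinearGroup.coe_mul, inv_mul_cancel]
    rfl
  rw [h1, Matrix.one_mul]

set_option maxHeartbeats 2000000 in
/-- Proposition 4.7: the fiber type `IV*` admits no monodromy decomposition into
`I₆ + II` and none into `I₆ + I₂`. -/
theorem IVstar_no_decomposition_I6_II_and_I6_I2 :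
    (¬ ∃ B₁ B₂ : SL2Z, ConjTo B₁ (AI 6) ∧ ConjTo B₂ AII ∧ ConjTo (B₁ * B₂) AIVstar) ∧
    (¬ ∃ B₁ B₂ : SL2Z, ConjTo B₁ (AI 6) ∧ ConjTo B₂ (AI 2) ∧ ConjTo (B₁ * B₂) AIVstar) := by
  constructor
  · rintro ⟨B₁, B₂, h1, h2, h3⟩
    let f := Matrix.SpecialLinearGroup.map (n := Fin 2) (Int.castRingHom (ZMod 3))
    have hAI : f (AI 6) = 1 := by
      apply Subtype.ext
      ext i j
      fin_cases i <;> fin_cases j <;> simp [f, AI, Matrix.SpecialLinearGroup.map_apply_coe, RingHom.mapMatrix_apply] <;> decide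
    have hB1 : f B₁ = 1 := by
      have hc := f.map_isConj (conjTo_isConj h1)
      rw [hAI] at hc
      exact isConj_one_left.mp hc
    have h3' := f.map_isConj (conjTo_isConj h3)
    rw [map_mul, hB1, one_mul] at h3'
    have h2' := f.map_isConj (conjTo_isConj h2)
    have t2 := trace_eq_of_isConj h2'
    have t3 := trace_eq_of_isConj h3'
    rw [t2] at t3
    simp [f, AII, AIVstar, Matrix.trace_fin_two, Matrix.SpecialLinearGroup.map_apply_coe, RingHom.mapMatrix_apply] at t3
    exact absurd t3 (by decide)
  · rintro ⟨B₁, B₂, h1, h2, h3⟩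
    let f := Matrix.SpecialLinearGroup.map (n := Fin 2) (Int.castRingHom (ZMod 2))
    have hAI : f (AI 6) = 1 := by
      apply Subtype.ext
      ext i j
      fin_cases i <;> fin_cases j <;> simp [f, AI, Matrix.SpecialLinearGroup.map_apply_coe, RingHom.mapMatrix_apply] <;> decide
    have hAI2 : f (AI 2) = 1 := by
      apply Subtype.ext
      ext i j
      fin_cases i <;> fin_cases j <;> simp [f, AI, Matrix.SpecialLinearGroup.map_apply_coe, RingHom.mapMatrix_apply] <;> decide
    have hB1 : f B₁ = 1 := by
      have hc := f.map_isConj (conjTo_isConj h1)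
      rw [hAI] at hc
      exact isConj_one_left.mp hc
    have hB2 : f B₂ = 1 := by
      have hc := f.map_isConj (conjTo_isConj h2)
      rw [hAI2] at hc
      exact isConj_one_left.mp hc
    have h3' := f.map_isConj (conjTo_isConj h3)
    rw [map_mul, hB1, hB2, one_mul] at h3'
    have t3 := trace_eq_of_isConj h3'
    simp [f, AIVstar, Matrix.trace_fin_two, Matrix.SpecialLinearGroup.map_apply_coe, RingHom.mapMatrix_apply] at t3
    exact absurd t3 (by decide)
end

section
/- (Undecomposability of type I₀* into I₃ + I₂ + I₁, Proposition 4.9) There do not exist matrices B₁, B₂, B₃ ∈ SL(2,ℤ) with B₁ conjugate in SL(2,ℤ) to A_{I₃} = [[1,3],[0,1]], B₂ conjugate to A_{I₂} = [[1,2],[0,1]], B₃ conjugate to A_{I₁} = [[1,1],[0,1]], and B₁·B₂·B₃ = -I. In other words, the fiber type I₀* admits no monodromy decomposition into I₃ + I₂ + I₁. -/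
lemma negI_eq : negI = -1 := by
  ext i j
  fin_cases i <;> fin_cases j <;> simp [negI]

lemma aux_trace (R V : SL2Z) : AI 3 * R * AI 2 * R⁻¹ ≠ negI * (V * (AI 1)⁻¹ * V⁻¹) := by
  intro h
  have hR : (R : Matrix (Fin 2) (Fin 2) ℤ).det = 1 := R.2
  have hV : (V : Matrix (Fin 2) (Fin 2) ℤ).det = 1 := V.2
  have ht := congrArg (fun g : SL2Z => Matrix.trace (g : Matrix (Fin 2) (Fin 2) ℤ)) h
  simp only [Matrix.SpecialLinearGroup.coe_mul, Matrix.SpecialLinearGroup.coe_inv] at ht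
  rw [Matrix.eta_fin_two (R : Matrix (Fin 2) (Fin 2) ℤ)] at ht hR
  rw [Matrix.eta_fin_two (V : Matrix (Fin 2) (Fin 2) ℤ)] at ht hV
  rw [Matrix.det_fin_two_of] at hR hV
  set a := (R : Matrix (Fin 2) (Fin 2) ℤ) 0 0
  set b := (R : Matrix (Fin 2) (Fin 2) ℤ) 0 1
  set c := (R : Matrix (Fin 2) (Fin 2) ℤ) 1 0
  set d := (R : Matrix (Fin 2) (Fin 2) ℤ) 1 1
  set e := (V : Matrix (Fin 2) (Fin 2) ℤ) 0 0
  set f := (V : Matrix (Fin 2) (Fin 2) ℤ) 0 1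
  set g := (V : Matrix (Fin 2) (Fin 2) ℤ) 1 0
  set k := (V : Matrix (Fin 2) (Fin 2) ℤ) 1 1
  simp [AI, negI, Matrix.adjugate_fin_two_of, Matrix.trace_fin_two_of, Matrix.mul_fin_two] at ht
  have hc : 6 * (c * c) = 4 := by linear_combination -ht + 2 * hR + 2 * hV
  have htri : c ≤ -1 ∨ c = 0 ∨ 1 ≤ c := by omega
  rcases htri with h1 | h1 | h1
  · nlinarith
  · simp [h1] at hc
  · nlinarith

/-- Proposition 4.9: the fiber type `I₀*` admits no monodromy decomposition into
`I₃ + I₂ + I₁`. -/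
theorem I0star_no_decomposition_I3_I2_I1 :
    ¬ ∃ B₁ B₂ B₃ : SL2Z, ConjTo B₁ (AI 3) ∧ ConjTo B₂ (AI 2) ∧ ConjTo B₃ (AI 1) ∧
      B₁ * B₂ * B₃ = negI := by
  rintro ⟨B₁, B₂, B₃, ⟨P, hP⟩, ⟨Q, hQ⟩, ⟨S, hS⟩, hprod⟩
  have hB₁ : B₁ = P⁻¹ * AI 3 * P := by rw [← hP]; group
  have hB₂ : B₂ = Q⁻¹ * AI 2 * Q := by rw [← hQ]; group
  have hB₃ : B₃ = S⁻¹ * AI 1 * S := by rw [← hS]; group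
  apply aux_trace (P * Q⁻¹) (P * S⁻¹)
  have h4' : B₁ * B₂ = negI * B₃⁻¹ := by rw [eq_mul_inv_iff_mul_eq]; exact hprod
  rw [hB₁, hB₂, hB₃] at h4'
  have hcomm : ∀ X : SL2Z, X * negI = negI * X := by
    intro X; rw [negI_eq, mul_neg_one, neg_one_mul]
  calc AI 3 * (P * Q⁻¹) * AI 2 * (P * Q⁻¹)⁻¹
      = P * ((P⁻¹ * AI 3 * P) * (Q⁻¹ * AI 2 * Q)) * P⁻¹ := by group
    _ = P * (negI * (S⁻¹ * AI 1 * S)⁻¹) * P⁻¹ := by rw [h4']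
    _ = (P * negI) * ((S⁻¹ * AI 1 * S)⁻¹ * P⁻¹) := by group
    _ = negI * (P * ((S⁻¹ * AI 1 * S)⁻¹ * P⁻¹)) := by rw [hcomm]; group
    _ = negI * ((P * S⁻¹) * (AI 1)⁻¹ * (P * S⁻¹)⁻¹) := by group
end

section
/- (Splittability of II into I₁ + I₁) There exist matrices B₁, B₂ ∈ SL(2,ℤ), each conjugate in SL(2,ℤ) to A_{I₁} = [[1,1],[0,1]], such that the product B₁·B₂ is conjugate in SL(2,ℤ) to A_{II} = [[1,1],[-1,0]]. In other words, the fiber type II admits a monodromy decomposition into I₁ + I₁. -/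
theorem conjTo_refl (A : SL2Z) : ConjTo A A := ⟨1, by group⟩

theorem conjTo_conj (Q A : SL2Z) : ConjTo (Q * A * Q⁻¹) A := ⟨Q⁻¹, by group⟩

/-- Since `AIIIstar * AI 1 = AIIstar` and `AIIIstar ^ 2 = -1`, this is `AIIstar ^ 2 = -AII`. -/
theorem AIIIstar_mul_AI_one_mul_self :
    AIIIstar * AI 1 * (AIIIstar * AI 1) = AII * (AIIIstar * AIIIstar) := by
  ext i j
  fin_cases i <;> fin_cases j <;> rfl

/-- The fiber type `II` admits a monodromy decomposition into `I₁ + I₁`. -/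
theorem II_decomposition_I1_I1 :
    ∃ B₁ B₂ : SL2Z, ConjTo B₁ (AI 1) ∧ ConjTo B₂ (AI 1) ∧ ConjTo (B₁ * B₂) AII := by
  refine ⟨AI 1, AIIIstar * AI 1 * AIIIstar⁻¹, conjTo_refl _, conjTo_conj _ _, AIIIstar, ?_⟩
  rw [mul_inv_eq_iff_eq_mul, ← mul_assoc, ← mul_assoc, mul_inv_eq_iff_eq_mul, mul_assoc AII]
  exact AIIIstar_mul_AI_one_mul_self
end

section
/- (Splittability of IV* into I₀* + I₁ + I₁ and into I₆ + I₁ + I₁) (a) There exist matrices B₁, B₂ ∈ SL(2,ℤ), each conjugate in SL(2,ℤ) to A_{I₁} = [[1,1],[0,1]], such that (-I)·B₁·B₂ is conjugate in SL(2,ℤ) to A_{IV*} = [[-1,-1],[1,0]]. (b) There exist matrices C, B₁, B₂ ∈ SL(2,ℤ) with C conjugate to A_{I₆} = [[1,6],[0,1]] and B₁, B₂ each conjugate to A_{I₁}, such that C·B₁·B₂ is conjugate to A_{IV*}. In other words, the fiber type IV* admits monodromy decompositions into I₀* + I₁ + I₁ and into I₆ + I₁ + I₁. -/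
def mkSL (a b c d : ℤ) (h : a * d - b * c = 1 := by norm_num) : SL2Z :=
  ⟨!![a, b; c, d], by simp [Matrix.det_fin_two_of, h]⟩

lemma conj_of_comm {A B P : SL2Z} (h : P * A = B * P) : P * A * P⁻¹ = B := by
  rw [mul_inv_eq_iff_eq_mul, h]

lemma sl2_ext {A B : SL2Z} (h : (A : Matrix (Fin 2) (Fin 2) ℤ) = B) : A = B :=
  Subtype.ext h
/-- The fiber type `IV*` admits monodromy decompositions into `I₀* + I₁ + I₁` and
into `I₆ + I₁ + I₁`. -/
theorem IVstar_decomposition_I0star_I1_I1_and_I6_I1_I1 :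
    (∃ B₁ B₂ : SL2Z, ConjTo B₁ (AI 1) ∧ ConjTo B₂ (AI 1) ∧
      ConjTo (negI * B₁ * B₂) AIVstar) ∧
    (∃ C B₁ B₂ : SL2Z, ConjTo C (AI 6) ∧ ConjTo B₁ (AI 1) ∧ ConjTo B₂ (AI 1) ∧
      ConjTo (C * B₁ * B₂) AIVstar) := by
  constructor
  · refine ⟨mkSL 0 1 (-1) 2, mkSL 1 1 0 1, ⟨mkSL (-3) 2 1 (-1), conj_of_comm ?_⟩,
      ⟨mkSL 1 0 0 1, conj_of_comm ?_⟩, ⟨mkSL (-1) 0 1 (-1), conj_of_comm ?_⟩⟩ <;>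
    · apply sl2_ext
      simp only [mkSL, negI, AI, AIVstar, Matrix.SpecialLinearGroup.coe_mul]
      decide
  · refine ⟨mkSL 1 6 0 1, mkSL 3 4 (-1) (-1), mkSL 0 1 (-1) 2,
      ⟨mkSL (-1) (-3) 0 (-1), conj_of_comm ?_⟩,
      ⟨mkSL (-2) (-3) (-1) (-2), conj_of_comm ?_⟩,
      ⟨mkSL (-3) 2 1 (-1), conj_of_comm ?_⟩,
      ⟨mkSL (-1) 2 1 (-3), conj_of_comm ?_⟩⟩ <;>
    · apply sl2_ext
      simp only [mkSL, AI, AIVstar, Matrix.SpecialLinearGroup.coe_mul]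
      decide
end

section
/- (Splittability of I_n* into I_{n+4} + I₁ + I₁) For every integer n ≥ 1, there exist matrices B₁, B₂, C ∈ SL(2,ℤ) with B₁, B₂ each conjugate in SL(2,ℤ) to A_{I₁} = [[1,1],[0,1]] and C conjugate to A_{I_{n+4}} = [[1,n+4],[0,1]], such that the product B₁·B₂·C is conjugate in SL(2,ℤ) to A_{I_n*} = -[[1,n],[0,1]]. In other words, the fiber type I_n* admits a monodromy decomposition into I₁ + I₁ + I_{n+4}. -/
/-- For every `n ≥ 1`, the fiber type `I_n*` admits a monodromy decomposition into
`I₁ + I₁ + I_{n+4}`. -/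
theorem Instar_decomposition_I1_I1_Inplus4 (n : ℤ) (hn : 1 ≤ n) :
    ∃ B₁ B₂ C : SL2Z, ConjTo B₁ (AI 1) ∧ ConjTo B₂ (AI 1) ∧ ConjTo C (AI (n + 4)) ∧
      ConjTo (B₁ * B₂ * C) (AIstar n) := by
  
  refine ⟨⟨!![1, 0; -1, 1], by norm_num [Matrix.det_fin_two_of]⟩,
         ⟨!![-1, 4; -1, 3], by norm_num [Matrix.det_fin_two_of]⟩,
         AI (n + 4), ?_, ?_, ⟨1, by group⟩, ?_⟩
  · refine ⟨⟨!![0, -1; 1, 0], by norm_num [Matrix.det_fin_two_of]⟩, ?_⟩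
    refine (mul_inv_eq_iff_eq_mul (G := SL2Z)).mpr ?_
    ext i j
    fin_cases i <;> fin_cases j <;>
      simp [AI, Matrix.SpecialLinearGroup.coe_mul, Matrix.mul_apply, Fin.sum_univ_two] <;>
      erw [Matrix.SpecialLinearGroup.coe_mul, Matrix.SpecialLinearGroup.coe_mul] <;>
      simp [AI, Matrix.mul_apply, Fin.sum_univ_two]
  · refine ⟨⟨!![1, -1; -1, 2], by norm_num [Matrix.det_fin_two_of]⟩, ?_⟩
    refine (mul_inv_eq_iff_eq_mul (G := SL2Z)).mpr ?_
    ext i j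
    fin_cases i <;> fin_cases j <;>
      simp [AI, Matrix.SpecialLinearGroup.coe_mul, Matrix.mul_apply, Fin.sum_univ_two] <;>
      erw [Matrix.SpecialLinearGroup.coe_mul, Matrix.SpecialLinearGroup.coe_mul] <;>
      simp [AI, Matrix.mul_apply, Fin.sum_univ_two]
  · refine ⟨1, ?_⟩
    refine (mul_inv_eq_iff_eq_mul (G := SL2Z)).mpr ?_
    ext i j
    fin_cases i <;> fin_cases j <;>
      simp [AI, Matrix.SpecialLinearGroup.coe_mul, AIstar, Matrix.mul_apply, Fin.sum_univ_two] <;>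
      erw [Matrix.SpecialLinearGroup.coe_mul, Matrix.SpecialLinearGroup.coe_mul, Matrix.SpecialLinearGroup.coe_mul] <;>
      simp [AI, Matrix.mul_apply, Fin.sum_univ_two] <;> ring
end

section
/- (Singularities of subordinate fibers near the core) Let m₀, n₀, l, d be positive integers with m₀ − l·n₀ > 0, let t ∈ ℂ be nonzero, let U ⊆ ℂ be open, and let σ, τ : U → ℂ be holomorphic. Define F : U × ℂ → ℂ by F(z,ζ) := σ(z)·ζ^{m₀ − l n₀}·(ζ^{n₀} + t^{d}·τ(z))^{l}, and define K : U → ℂ by K(z) := n₀·σ'(z)·τ(z) + m₀·σ(z)·τ'(z). Then for every (z,ζ) ∈ U × ℂ with F(z,ζ) ≠ 0, the two partial derivatives ∂F/∂z and ∂F/∂ζ both vanish at (z,ζ) if and only if K(z) = 0, σ(z) ≠ 0, τ(z) ≠ 0, and ζ^{n₀} = ((l·n₀ − m₀)/m₀)·t^{d}·τ(z). Moreover, in that case F(z,ζ) = ((l·n₀)/(l·n₀ − m₀))^{l}·σ(z)·ζ^{m₀}. -/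
/-- Singularities of subordinate fibers near the core.  With
`F(z,ζ) = σ(z) ζ^{m₀ - l n₀} (ζ^{n₀} + t^d τ(z))^l` for holomorphic `σ, τ` on an
open set `U` and `K(z) = n₀ σ'(z) τ(z) + m₀ σ(z) τ'(z)`, a point
`(z,ζ) ∈ U × ℂ` with `F(z,ζ) ≠ 0` has both partial derivatives of `F` vanishing
iff `K(z) = 0`, `σ(z) ≠ 0`, `τ(z) ≠ 0` and
`ζ^{n₀} = ((l n₀ - m₀)/m₀) t^d τ(z)`; and in that case
`F(z,ζ) = (l n₀/(l n₀ - m₀))^l σ(z) ζ^{m₀}`. -/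
theorem core_singularity_criterion
    (m₀ n₀ l d : ℕ) (hm₀ : 0 < m₀) (hn₀ : 0 < n₀) (hl : 0 < l) (hd : 0 < d)
    (hml : l * n₀ < m₀)
    (t : ℂ) (ht : t ≠ 0)
    (U : Set ℂ) (hU : IsOpen U)
    (σ τ : ℂ → ℂ) (hσ : DifferentiableOn ℂ σ U) (hτ : DifferentiableOn ℂ τ U)
    (F : ℂ → ℂ → ℂ)
    (hF : ∀ z ζ : ℂ, F z ζ = σ z * ζ ^ (m₀ - l * n₀) * (ζ ^ n₀ + t ^ d * τ z) ^ l)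
    (K : ℂ → ℂ)
    (hK : ∀ z : ℂ, K z = n₀ * deriv σ z * τ z + m₀ * σ z * deriv τ z) :
    ∀ z ∈ U, ∀ ζ : ℂ, F z ζ ≠ 0 →
      ((deriv (fun w => F w ζ) z = 0 ∧ deriv (fun w => F z w) ζ = 0) ↔
        (K z = 0 ∧ σ z ≠ 0 ∧ τ z ≠ 0 ∧
          ζ ^ n₀ = ((l * n₀ : ℂ) - m₀) / m₀ * t ^ d * τ z)) ∧
      ((deriv (fun w => F w ζ) z = 0 ∧ deriv (fun w => F z w) ζ = 0) →
        F z ζ = ((l * n₀ : ℂ) / ((l * n₀ : ℂ) - m₀)) ^ l * σ z * ζ ^ m₀) := by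
  intro z hz ζ hFne
  set a := m₀ - l * n₀ with haDef
  have haℕ : a + l * n₀ = m₀ := Nat.sub_add_cancel hml.le
  have hapos : 0 < a := Nat.sub_pos_of_lt hml
  obtain ⟨a₁, ha1⟩ : ∃ k, a = k + 1 := ⟨a - 1, (Nat.succ_pred_eq_of_pos hapos).symm⟩
  obtain ⟨l₁, hl1⟩ : ∃ k, l = k + 1 := ⟨l - 1, (Nat.succ_pred_eq_of_pos hl).symm⟩
  obtain ⟨n₁, hn1⟩ : ∃ k, n₀ = k + 1 := ⟨n₀ - 1, (Nat.succ_pred_eq_of_pos hn₀).symm⟩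
  have hσz : HasDerivAt σ (deriv σ z) z :=
    (hσ.differentiableAt (hU.mem_nhds hz)).hasDerivAt
  have hτz : HasDerivAt τ (deriv τ z) z :=
    (hτ.differentiableAt (hU.mem_nhds hz)).hasDerivAt
  set c : ℂ := t ^ d with hcDef
  have hc : c ≠ 0 := pow_ne_zero _ ht
  set B : ℂ := ζ ^ n₀ + c * τ z with hBDef
  have hFval : F z ζ = σ z * ζ ^ a * B ^ l := hF z ζ
  rw [hFval] at hFne
  have hσ0 : σ z ≠ 0 := fun h => hFne (by rw [h]; ring)
  have hζ0 : ζ ≠ 0 := by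
    intro h; apply hFne; rw [h, zero_pow (by omega : a ≠ 0)]; ring
  have hB0 : B ≠ 0 := by
    intro h; apply hFne; rw [h, zero_pow (by omega : l ≠ 0)]; ring
  have hm0C : (m₀ : ℂ) ≠ 0 := Nat.cast_ne_zero.mpr hm₀.ne'
  have hmC : (a : ℂ) + l * n₀ = (m₀ : ℂ) := by exact_mod_cast congrArg (Nat.cast : ℕ → ℂ) haℕ
  have hlnm : (l : ℂ) * n₀ - m₀ ≠ 0 := by
    rw [sub_ne_zero]
    exact_mod_cast hml.ne
  have hlC : (l : ℂ) ≠ 0 := Nat.cast_ne_zero.mpr hl.ne'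
  have h1 : HasDerivAt (fun w => F w ζ)
      (deriv σ z * ζ ^ a * B ^ l + σ z * ζ ^ a * ((l : ℂ) * B ^ (l - 1) * (c * deriv τ z))) z := by
    have he : (fun w => F w ζ) = fun w => σ w * ζ ^ a * (ζ ^ n₀ + c * τ w) ^ l :=
      funext fun w => hF w ζ
    rw [he]
    exact (hσz.mul_const (ζ ^ a)).mul (((hτz.const_mul c).const_add (ζ ^ n₀)).pow l)
  have h2 : HasDerivAt (fun w => F z w)
      (σ z * ((a : ℂ) * ζ ^ (a - 1)) * B ^ l +
        σ z * ζ ^ a * ((l : ℂ) * B ^ (l - 1) * ((n₀ : ℂ) * ζ ^ (n₀ - 1)))) ζ := by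
    have he : (fun w => F z w) = fun w => σ z * w ^ a * (w ^ n₀ + c * τ z) ^ l :=
      funext fun w => hF z w
    rw [he]
    exact ((hasDerivAt_pow a ζ).const_mul (σ z)).mul
      (((hasDerivAt_pow n₀ ζ).add_const (c * τ z)).pow l)
  have hDz := h1.deriv
  have hDζ := h2.deriv
  have hfacζ : deriv (fun w => F z w) ζ
      = σ z * ζ ^ a₁ * B ^ l₁ * ((a : ℂ) * B + (l : ℂ) * n₀ * ζ ^ n₀) := by
    rw [hDζ, ha1, hl1, hn1]
    push_cast
    simp only [Nat.add_sub_cancel, pow_succ]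
    ring
  have hfacz : deriv (fun w => F w ζ) z
      = ζ ^ a * B ^ l₁ * (deriv σ z * B + (l : ℂ) * σ z * c * deriv τ z) := by
    rw [hDz, hl1]
    simp only [Nat.add_sub_cancel, pow_succ]
    push_cast
    ring
  have hne1 : σ z * ζ ^ a₁ * B ^ l₁ ≠ 0 :=
    mul_ne_zero (mul_ne_zero hσ0 (pow_ne_zero _ hζ0)) (pow_ne_zero _ hB0)
  have hne2 : ζ ^ a * B ^ l₁ ≠ 0 := mul_ne_zero (pow_ne_zero _ hζ0) (pow_ne_zero _ hB0)
  constructor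
  · constructor
    · rintro ⟨hz0, hζ0'⟩
      rw [hfacζ] at hζ0'
      have hkey : (a : ℂ) * B + (l : ℂ) * n₀ * ζ ^ n₀ = 0 :=
        (mul_eq_zero.mp hζ0').resolve_left hne1
      have hzeta' : (m₀ : ℂ) * ζ ^ n₀ = ((l : ℂ) * n₀ - m₀) * (c * τ z) := by
        linear_combination hkey - (ζ ^ n₀ + c * τ z) * hmC + ((a : ℂ) * hBDef)
      have hzeta : ζ ^ n₀ = ((l * n₀ : ℂ) - m₀) / m₀ * c * τ z := by
        field_simp
        linear_combination hzeta'
      have hτ0 : τ z ≠ 0 := by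
        intro h
        apply pow_ne_zero n₀ hζ0
        rw [hzeta, h]; ring
      have hBval' : (m₀ : ℂ) * B = (l : ℂ) * n₀ * (c * τ z) := by
        linear_combination (m₀ : ℂ) * hBDef + hzeta'
      refine ⟨?_, hσ0, hτ0, hzeta⟩
      rw [hfacz] at hz0
      have hkey2 : deriv σ z * B + (l : ℂ) * σ z * c * deriv τ z = 0 :=
        (mul_eq_zero.mp hz0).resolve_left hne2
      rw [hK]
      have hfin : (l : ℂ) * c * ((n₀ : ℂ) * deriv σ z * τ z + (m₀ : ℂ) * σ z * deriv τ z) = 0 := by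
        linear_combination (m₀ : ℂ) * hkey2 - deriv σ z * hBval'
      exact (mul_eq_zero.mp hfin).resolve_left (mul_ne_zero hlC hc)
    · rintro ⟨hK0, hσ0', hτ0, hzeta⟩
      have hzeta' : (m₀ : ℂ) * ζ ^ n₀ = ((l : ℂ) * n₀ - m₀) * (c * τ z) := by
        rw [hzeta]; field_simp
      have hBval' : (m₀ : ℂ) * B = (l : ℂ) * n₀ * (c * τ z) := by
        linear_combination (m₀ : ℂ) * hBDef + hzeta'
      have hK0' : (n₀ : ℂ) * deriv σ z * τ z + (m₀ : ℂ) * σ z * deriv τ z = 0 := by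
        rw [hK] at hK0; exact hK0
      constructor
      · rw [hfacz]
        have hv : deriv σ z * B + (l : ℂ) * σ z * c * deriv τ z = 0 := by
          have h0 : (m₀ : ℂ) * (deriv σ z * B + (l : ℂ) * σ z * c * deriv τ z) = 0 := by
            linear_combination deriv σ z * hBval' + (l : ℂ) * c * hK0'
          exact (mul_eq_zero.mp h0).resolve_left hm0C
        rw [hv, mul_zero]
      · rw [hfacζ]
        have hv : (a : ℂ) * B + (l : ℂ) * n₀ * ζ ^ n₀ = 0 := by
          have h0 : (m₀ : ℂ) * ((a : ℂ) * B + (l : ℂ) * n₀ * ζ ^ n₀) = 0 := by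
            linear_combination (a : ℂ) * hBval' + (l : ℂ) * (n₀ : ℂ) * hzeta' +
              ((l : ℂ) * n₀ * (c * τ z)) * hmC
          exact (mul_eq_zero.mp h0).resolve_left hm0C
        rw [hv, mul_zero]
  · rintro ⟨hz0, hζ0'⟩
    rw [hfacζ] at hζ0'
    have hkey : (a : ℂ) * B + (l : ℂ) * n₀ * ζ ^ n₀ = 0 :=
      (mul_eq_zero.mp hζ0').resolve_left hne1
    have hzeta' : (m₀ : ℂ) * ζ ^ n₀ = ((l : ℂ) * n₀ - m₀) * (c * τ z) := by
      linear_combination hkey - (ζ ^ n₀ + c * τ z) * hmC + ((a : ℂ) * hBDef)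
    have hB2' : ((l : ℂ) * n₀ - m₀) * B = (l : ℂ) * n₀ * ζ ^ n₀ := by
      linear_combination ((l : ℂ) * n₀ - m₀) * hBDef - hzeta'
    have hBval2 : B = (l : ℂ) * n₀ / ((l : ℂ) * n₀ - m₀) * ζ ^ n₀ := by
      field_simp
      linear_combination hB2'
    rw [hFval, hBval2]
    rw [mul_pow, ← pow_mul]
    have hpow : ζ ^ a * ζ ^ (n₀ * l) = ζ ^ m₀ := by
      rw [← pow_add]
      congr 1
      rw [Nat.mul_comm n₀ l]
      omega
    rw [← hpow]
    ring
end
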